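/- The set of all single-peaked linear orders on {1,...,n} with respect to the axis 1 < 2 < ... < n is a Condorcet domain: every profile with an odd number of voters whose preferences are single-peaked has a transitive majority relation. -/

import Mathlib

/-- The majority relation of a profile `P` of `k` voters: `a` beats `b` if more voters
rank `a` above `b` than rank `b` above `a`. -/
def Maj {α : Type*} {k : ℕ} (P : Fin k → α → α → Prop) (a b : α) : Prop :=
  Nat.card {i : Fin k // P i a b} > Nat.card {i : Fin k // P i b a}

/-- `D` is a Condorcet domain: a set of linear orders (strict total orders) on the
alternatives such that every profile with an odd number of voters drawn from `D`
has a transitive majority relation. -/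
def IsCondorcetDomain {α : Type*} (D : Set (α → α → Prop)) : Prop :=
  (∀ r ∈ D, IsStrictTotalOrder α r) ∧
  ∀ (k : ℕ), Odd k → ∀ P : Fin k → α → α → Prop,
    (∀ i, P i ∈ D) → Transitive (Maj P)

/-- A linear order on `Fin n` is single-peaked with respect to the axis
`0 < 1 < ⋯ < n-1` if there is a peak `p` such that among alternatives on the same
side of `p`, the one closer to `p` is preferred. -/
def SinglePeaked {n : ℕ} (r : Fin n → Fin n → Prop) : Prop :=
  IsStrictTotalOrder (Fin n) r ∧
  ∃ p : Fin n, (∀ i j : Fin n, i < j → j ≤ p → r j i) ∧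
    (∀ i j : Fin n, p ≤ i → i < j → r i j)

/-!
Single-peakedness makes the middle one of any three alternatives (on the axis) never ranked
last among them. If `y` is never last among `x, y, z`, every voter preferring `z` to `x` also
prefers `y` to `x`, so a majority cannot rank `x` above `y` and `z` above `x` at once (Sen's
value restriction). Every alternative of a majority cycle `a → b → c → a` is in that position
with respect to the other two, in particular the middle one. With an odd number of voters the
majority relation is complete, so a failure of transitivity would produce such a cycle.
-/

open Set

theorem not_rel_iff_rel_swap_of_ne {α : Type*} {r : α → α → Prop} [IsStrictTotalOrder α r]
    {a b : α} (hab : a ≠ b) : ¬ r a b ↔ r b a :=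
  ⟨fun h => ((trichotomous_of r a b).resolve_left h).resolve_left hab, fun h h' => asymm h h'⟩

section Majority

variable {α : Type*} {k : ℕ} {P : Fin k → α → α → Prop}

theorem Maj.ne {a b : α} (h : Maj P a b) : a ≠ b := by
  rintro rfl
  exact lt_irrefl _ h

theorem Maj.asymm {a b : α} (h : Maj P a b) : ¬ Maj P b a :=
  lt_asymm h

theorem card_rel_add_card_rel_swap (hP : ∀ i, IsStrictTotalOrder α (P i)) {a b : α}
    (hab : a ≠ b) : Nat.card {i // P i a b} + Nat.card {i // P i b a} = k := by
  classical
  have hswap : ∀ i, ¬ P i a b ↔ P i b a := fun _ => not_rel_iff_rel_swap_of_ne hab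
  rw [← Nat.card_congr (Equiv.subtypeEquivRight hswap), Nat.card_eq_fintype_card,
    Nat.card_eq_fintype_card, Fintype.card_subtype_compl,
    Nat.add_sub_cancel' (Fintype.card_subtype_le _), Fintype.card_fin]

theorem Maj.total_of_odd (hP : ∀ i, IsStrictTotalOrder α (P i)) (hk : Odd k) {a b : α}
    (hab : a ≠ b) : Maj P a b ∨ Maj P b a := by
  have hsum := card_rel_add_card_rel_swap hP hab
  obtain ⟨m, rfl⟩ := hk
  unfold Maj
  omega

theorem not_maj_and_maj_of_never_last (hP : ∀ i, IsStrictTotalOrder α (P i)) {x y z : α}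
    (hy : ∀ i, ¬ (P i x y ∧ P i z y)) : ¬ (Maj P x y ∧ Maj P z x) := by
  rintro ⟨hxy, hzx⟩
  have hzx_sub_yx : {i | P i z x} ⊆ {i | P i y x} := fun i hzxi =>
    (not_rel_iff_rel_swap_of_ne hxy.ne).1 fun hxyi => hy i ⟨hxyi, _root_.trans hzxi hxyi⟩
  have hle := Nat.card_mono (toFinite _) hzx_sub_yx
  have hsum_xy := card_rel_add_card_rel_swap hP hxy.ne
  have hsum_xz := card_rel_add_card_rel_swap hP hzx.ne.symm
  unfold Maj at hxy hzx
  simp only [coe_ofPred] at hle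
  omega

theorem mem_uIoo_or_mem_uIoo_or_mem_uIoo [LinearOrder α] {a b c : α} (hab : a ≠ b)
    (hbc : b ≠ c) (hca : c ≠ a) : b ∈ uIoo a c ∨ c ∈ uIoo b a ∨ a ∈ uIoo c b := by
  simp only [uIoo_eq_union, mem_union, mem_Ioo]
  grind

theorem not_maj_cycle [LinearOrder α] (hP : ∀ i, IsStrictTotalOrder α (P i))
    (hmid : ∀ i {x y z : α}, y ∈ uIoo x z → ¬ (P i x y ∧ P i z y)) {a b c : α}
    (hab : Maj P a b) (hbc : Maj P b c) (hca : Maj P c a) : False := by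
  have key : ∀ {x y z : α}, y ∈ uIoo x z → Maj P x y → Maj P z x → False :=
    fun hy hxy hzx => not_maj_and_maj_of_never_last hP (fun i => hmid i hy) ⟨hxy, hzx⟩
  rcases mem_uIoo_or_mem_uIoo_or_mem_uIoo hab.ne hbc.ne hca.ne with h | h | h
  exacts [key h hab hca, key h hbc hab, key h hca hbc]

end Majority

theorem SinglePeaked.not_last_of_mem_uIoo {n : ℕ} {r : Fin n → Fin n → Prop}
    (h : SinglePeaked r) {x y z : Fin n} (hy : y ∈ uIoo x z) : ¬ (r x y ∧ r z y) := by
  rintro ⟨hxy, hzy⟩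
  obtain ⟨hr, p, hleft, hright⟩ := h
  rw [uIoo_eq_union] at hy
  rcases hy with ⟨h₁, h₂⟩ | ⟨h₁, h₂⟩ <;> rcases le_total y p with hp | hp
  exacts [asymm hxy (hleft x y h₁ hp), asymm hzy (hright y z hp h₂),
    asymm hzy (hleft z y h₁ hp), asymm hxy (hright y x hp h₂)]

/-- Black's theorem (transitivity part): the set of all single-peaked linear orders with
respect to the natural axis is a Condorcet domain. -/
theorem singlePeaked_isCondorcetDomain (n : ℕ) :
    IsCondorcetDomain {r : Fin n → Fin n → Prop | SinglePeaked r} := by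
  refine ⟨fun r hr => hr.1, fun k hk P hP a b c hab hbc => ?_⟩
  have hsto : ∀ i, IsStrictTotalOrder (Fin n) (P i) := fun i => (hP i).1
  have hac : a ≠ c := by
    rintro rfl
    exact hab.asymm hbc
  refine (Maj.total_of_odd hsto hk hac).resolve_right fun hca => ?_
  exact not_maj_cycle hsto (fun i _ _ _ => (hP i).not_last_of_mem_uIoo) hab hbc hca
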